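/- arXiv:1307.4724 — 2 statements merged into one kernel-verified Lean document; each statement's English description precedes it below -/
import Mathlib

section
/- Let G and H be finite connected nontrivial simple graphs of order n₁ and n₂ respectively, and suppose the strong resolving graph G_SR is a C-graph (its vertex set can be partitioned into β(G_SR) cliques). Then dim_s(G ⊠ H) = n₂ · dim_s(G) + n₁ · dim_s(H) − dim_s(G) · dim_s(H). -/
open SimpleGraph Finset

variable {α β : Type*}

/-- The strong product of two simple graphs: distinct vertices `(a,b)` and `(c,d)` are adjacent
iff (`a = c` or `a ~ c`) and (`b = d` or `b ~ d`). -/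
def strongProd (G : SimpleGraph α) (H : SimpleGraph β) : SimpleGraph (α × β) where
  Adj x y := x ≠ y ∧ (x.1 = y.1 ∨ G.Adj x.1 y.1) ∧ (x.2 = y.2 ∨ H.Adj x.2 y.2)
  symm := ⟨by
    rintro x y ⟨h1, h2, h3⟩
    exact ⟨h1.symm, h2.imp Eq.symm (fun a => a.symm), h3.imp Eq.symm (fun a => a.symm)⟩⟩
  loopless := ⟨fun x h => h.1 rfl⟩

/-- The Cartesian sum (disjunctive product) of two simple graphs. -/
def cartSum (G : SimpleGraph α) (H : SimpleGraph β) : SimpleGraph (α × β) where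
  Adj x y := x ≠ y ∧ (G.Adj x.1 y.1 ∨ H.Adj x.2 y.2)
  symm := ⟨by
    rintro x y ⟨h1, h2⟩
    exact ⟨h1.symm, h2.imp (fun a => a.symm) (fun a => a.symm)⟩⟩
  loopless := ⟨fun x h => h.1 rfl⟩

/-- `u` is maximally distant from `v` in `G`. -/
def MaximallyDistantFrom (G : SimpleGraph α) (u v : α) : Prop :=
  ∀ w, G.Adj u w → G.dist v w ≤ G.dist u v

/-- `u` and `v` are mutually maximally distant in `G`. -/
def MutuallyMaximallyDistant (G : SimpleGraph α) (u v : α) : Prop :=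
  MaximallyDistantFrom G u v ∧ MaximallyDistantFrom G v u

/-- The strong resolving graph of `G`. -/
def strongResolvingGraph (G : SimpleGraph α) : SimpleGraph α where
  Adj u v := u ≠ v ∧ MutuallyMaximallyDistant G u v
  symm := ⟨by rintro u v ⟨h1, h2, h3⟩; exact ⟨h1.symm, h3, h2⟩⟩
  loopless := ⟨fun x h => h.1 rfl⟩

/-- A finset of vertices is independent if no two of its (distinct) members are adjacent. -/
def IsIndepFinset (G : SimpleGraph α) (s : Finset α) : Prop :=
  ∀ u ∈ s, ∀ v ∈ s, u ≠ v → ¬ G.Adj u v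

/-- The independence number `β(G)`. -/
noncomputable def indepNum (G : SimpleGraph α) [Fintype α] : ℕ :=
  sSup {n | ∃ s : Finset α, IsIndepFinset G s ∧ s.card = n}

/-- `w` strongly resolves `u` and `v` in `G`. -/
def StronglyResolves (G : SimpleGraph α) (w u v : α) : Prop :=
  G.dist w u = G.dist w v + G.dist v u ∨ G.dist w v = G.dist w u + G.dist u v

/-- A strong metric generator for `G`. -/
def IsStrongMetricGenerator (G : SimpleGraph α) (s : Finset α) : Prop :=
  ∀ u v : α, u ≠ v → ∃ w ∈ s, StronglyResolves G w u v

/-- The strong metric dimension of `G`. -/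
noncomputable def sdim (G : SimpleGraph α) [Fintype α] : ℕ :=
  sInf {n | ∃ s : Finset α, IsStrongMetricGenerator G s ∧ s.card = n}

/-- A `C`-graph: the vertex set can be partitioned into `β(G)` cliques. -/
def IsCGraph (G : SimpleGraph α) [Fintype α] [DecidableEq α] : Prop :=
  ∃ P : Finpartition (Finset.univ : Finset α),
    P.parts.card = _root_.indepNum G ∧ ∀ p ∈ P.parts, G.IsClique (p : Set α)

/-- A `C₁`-graph: the vertex set can be partitioned into `β(G)` cliques together with one
singleton `{b}`, where `b` is an isolated vertex. -/
def IsC1Graph (G : SimpleGraph α) [Fintype α] [DecidableEq α] : Prop :=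
  ∃ (P : Finpartition (Finset.univ : Finset α)) (b : α),
    {b} ∈ P.parts ∧ (∀ w, ¬ G.Adj b w) ∧
    P.parts.card = _root_.indepNum G + 1 ∧
    ∀ p ∈ P.parts, p ≠ {b} → G.IsClique (p : Set α)

/-- The diameter of a graph: the largest distance between two vertices. -/
noncomputable def gDiam (G : SimpleGraph α) : ℕ := sSup {d | ∃ u v : α, G.dist u v = d}

/-!
By a theorem of Oellermann and Peters-Fransen, `sdim K = |V(K)| - β(K_SR)` for connected `K`:
strong metric generators of `K` are exactly the vertex covers of `K_SR`, since mutually maximally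
distant vertices can only be strongly resolved by themselves, and every pair of distinct vertices
is strongly resolved by both ends of some edge of `K_SR`.

Distances in `G ⊠ H` are maxima of the distances in the factors, which squeezes `(G ⊠ H)_SR`
between `G_SR ⊠ H_SR` and the disjunctive product of `G_SR` and `H_SR`. The latter contains the
products of independent sets, so `β(G_SR) β(H_SR) ≤ β((G ⊠ H)_SR)`. In the former, a partition of
`V(G_SR)` into `β(G_SR)` cliques cuts an independent set into `β(G_SR)` pieces, each projecting
injectively onto an independent set of `H_SR`; so `β((G ⊠ H)_SR) = β(G_SR) β(H_SR)` and the
formula is arithmetic.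
-/

section IndependenceNumber

lemma indepNum_anti [Finite α] {G G' : SimpleGraph α} (h : G ≤ G') :
    G'.indepNum ≤ G.indepNum := by
  obtain ⟨s, hs⟩ := G'.exists_isNIndepSet_indepNum
  rw [← hs.card_eq]
  exact IsIndepSet.card_le_indepNum (hs.isIndepSet.mono' fun _ _ hn ha => hn (h ha))

lemma indepNum_le_card [Fintype α] (G : SimpleGraph α) : G.indepNum ≤ Fintype.card α := by
  obtain ⟨s, hs⟩ := G.exists_isNIndepSet_indepNum
  exact hs.card_eq ▸ card_le_univ s

lemma isIndepFinset_iff {G : SimpleGraph α} {s : Finset α} :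
    IsIndepFinset G s ↔ G.IsIndepSet s := by
  simp [IsIndepFinset, IsIndepSet, Set.Pairwise]

lemma indepNum_eq_simpleGraph_indepNum [Fintype α] (G : SimpleGraph α) :
    _root_.indepNum G = G.indepNum := by
  simp only [_root_.indepNum, SimpleGraph.indepNum, isNIndepSet_iff, isIndepFinset_iff]

end IndependenceNumber

section StrongMetricDimension

variable {K : SimpleGraph α}

lemma SimpleGraph.Reachable.exists_adj_dist_add_one_eq {v w : α} (h : K.Reachable v w)
    (hvw : v ≠ w) :
    ∃ z, K.Adj v z ∧ K.dist z w + 1 = K.dist v w := by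
  obtain ⟨p, hp⟩ := h.exists_walk_length_eq_dist
  cases p with
  | nil => exact absurd rfl hvw
  | cons hadj q =>
    refine ⟨_, hadj, le_antisymm ?_ ?_⟩
    · rw [← hp, Walk.length_cons]
      exact Nat.add_le_add_right (dist_le q) 1
    · have := hadj.reachable.dist_triangle_left w
      rw [dist_eq_one_iff_adj.mpr hadj] at this
      omega

lemma MaximallyDistantFrom.dist_lt_dist_add_dist {u v w : α} (hv : MaximallyDistantFrom K v u)
    (hK : K.Connected) (hwv : w ≠ v) : K.dist w u < K.dist w v + K.dist v u := by
  obtain ⟨z, hvz, hz⟩ := Reachable.exists_adj_dist_add_one_eq (hK v w) hwv.symm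
  have hzu : K.dist z u ≤ K.dist v u := dist_comm.trans_le (hv z hvz)
  calc K.dist w u ≤ K.dist w z + K.dist z u := hK.dist_triangle
    _ < K.dist w v + K.dist v u := by rw [dist_comm (u := w), dist_comm (u := w)]; omega

lemma StronglyResolves.eq_or_eq_of_mutuallyMaximallyDistant {u v w : α} (hK : K.Connected)
    (h : StronglyResolves K w u v) (huv : MutuallyMaximallyDistant K u v) : w = u ∨ w = v := by
  by_contra! hw
  rcases h with h | h
  · exact (huv.2.dist_lt_dist_add_dist hK hw.2).ne h
  · exact (huv.1.dist_lt_dist_add_dist hK hw.1).ne h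

lemma exists_maximallyDistantFrom_dist_eq_add [Finite α] (hK : K.Connected) (v u : α) :
    ∃ u', MaximallyDistantFrom K u' v ∧ K.dist v u' = K.dist v u + K.dist u u' := by
  classical
  have := Fintype.ofFinite α
  -- `u'` is farthest from `v` among the `x` such that `u` lies on a geodesic from `v` to `x`
  obtain ⟨u', hu', hmax⟩ := ({x | K.dist v x = K.dist v u + K.dist u x} : Finset α).exists_max_image
    (K.dist v) ⟨u, by simp⟩
  rw [mem_filter_univ] at hu'
  refine ⟨u', fun w hw => ?_, hu'⟩
  by_contra! hlt
  have hu'w : K.dist u' w = 1 := dist_eq_one_iff_adj.mpr hw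
  have hcomm : K.dist u' v = K.dist v u' := dist_comm
  have h₁ := hw.reachable.dist_triangle_right v
  have h₂ := hw.reachable.dist_triangle_right u
  have h₃ := hK.dist_triangle (u := v) (v := u) (w := w)
  have := hmax w ((mem_filter_univ w).mpr (by omega))
  omega

lemma exists_strongResolvingGraph_adj_stronglyResolves [Finite α] (hK : K.Connected) {u v : α}
    (huv : u ≠ v) : ∃ u' v', (strongResolvingGraph K).Adj u' v' ∧
      StronglyResolves K u' u v ∧ StronglyResolves K v' u v := by
  obtain ⟨u', hu', hdu'⟩ := exists_maximallyDistantFrom_dist_eq_add hK v u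
  obtain ⟨v', hv', hdv'⟩ := exists_maximallyDistantFrom_dist_eq_add hK u' v
  have hpos := hK.pos_dist_of_ne huv
  have c₁ : K.dist u' v = K.dist v u' := dist_comm
  have c₂ : K.dist u' u = K.dist u u' := dist_comm
  have c₃ : K.dist u v = K.dist v u := dist_comm
  have c₄ : K.dist v' v = K.dist v v' := dist_comm
  have c₅ : K.dist v' u = K.dist u v' := dist_comm
  have c₆ : K.dist v' u' = K.dist u' v' := dist_comm
  have hmd : MaximallyDistantFrom K u' v' := fun w hw => by
    have := hu' w hw
    have := hK.dist_triangle (u := v') (v := v) (w := w)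
    omega
  have hne : u' ≠ v' := by
    rintro rfl
    rw [SimpleGraph.dist_self] at hdv'
    omega
  refine ⟨u', v', ⟨hne, hmd, hv'⟩, .inr (by omega), .inl ?_⟩
  have := hK.dist_triangle (u := u') (v := u) (w := v')
  have := hK.dist_triangle (u := v') (v := v) (w := u)
  omega

theorem isStrongMetricGenerator_iff_isVertexCover [Finite α] (hK : K.Connected) {S : Finset α} :
    IsStrongMetricGenerator K S ↔ (strongResolvingGraph K).IsVertexCover S := by
  constructor
  · intro hS u v ⟨huv, hmmd⟩
    obtain ⟨w, hw, hres⟩ := hS u v huv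
    rcases hres.eq_or_eq_of_mutuallyMaximallyDistant hK hmmd with rfl | rfl
    exacts [.inl hw, .inr hw]
  · intro hS u v huv
    obtain ⟨u', v', hadj, hu', hv'⟩ := exists_strongResolvingGraph_adj_stronglyResolves hK huv
    rcases hS hadj with h | h
    exacts [⟨u', h, hu'⟩, ⟨v', h, hv'⟩]

theorem sdim_eq_card_sub_indepNum [Fintype α] (hK : K.Connected) :
    sdim K = Fintype.card α - (strongResolvingGraph K).indepNum := by
  classical
  have hcompl : ∀ S : Finset α, IsStrongMetricGenerator K S ↔
      (strongResolvingGraph K).IsIndepSet (Sᶜ : Finset α) := fun S => by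
    rw [isStrongMetricGenerator_iff_isVertexCover hK, coe_compl, isIndepSet_compl_iff_isVertexCover]
  obtain ⟨I, hI⟩ := (strongResolvingGraph K).exists_isNIndepSet_indepNum
  have hIgen : IsStrongMetricGenerator K Iᶜ := (hcompl _).mpr (by rw [compl_compl]; exact hI.1)
  apply le_antisymm
  · exact Nat.sInf_le ⟨Iᶜ, hIgen, by rw [card_compl, hI.card_eq]⟩
  · refine le_csInf ⟨_, Iᶜ, hIgen, rfl⟩ ?_
    rintro _ ⟨S, hS, rfl⟩
    have := ((hcompl S).mp hS).card_le_indepNum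
    rw [card_compl] at this
    omega

end StrongMetricDimension

lemma dist_le_length_of_adj_imp {V W : Type*} {G : SimpleGraph V} {H : SimpleGraph W}
    (f : V → W) (hf : ∀ ⦃x y⦄, G.Adj x y → f x = f y ∨ H.Adj (f x) (f y)) :
    ∀ {x y : V} (p : G.Walk x y), H.dist (f x) (f y) ≤ p.length
  | _, _, .nil => by simp
  | _, y, .cons h p => by
      have ih := dist_le_length_of_adj_imp f hf p
      rw [Walk.length_cons]
      rcases hf h with he | ha
      · rw [he]
        omega
      · have := ha.reachable.dist_triangle_left (f y)
        rw [dist_eq_one_iff_adj.mpr ha] at this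
        omega

section StrongProduct

variable {G : SimpleGraph α} {H : SimpleGraph β}

def strongProdLeft (G : SimpleGraph α) (H : SimpleGraph β) (b : β) : G →g strongProd G H where
  toFun a := (a, b)
  map_rel' h := ⟨fun he => h.ne (congrArg Prod.fst he), Or.inr h, Or.inl rfl⟩

def strongProdRight (G : SimpleGraph α) (H : SimpleGraph β) (a : α) : H →g strongProd G H where
  toFun b := (a, b)
  map_rel' h := ⟨fun he => h.ne (congrArg Prod.snd he), Or.inl rfl, Or.inr h⟩

def strongProdWalk : ∀ {a c : α} {b d : β}, G.Walk a c → H.Walk b d →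
    (strongProd G H).Walk (a, b) (c, d)
  | _, _, _, _, .nil, q => q.map (strongProdRight G H _)
  | _, _, _, _, p@(.cons _ _), .nil => p.map (strongProdLeft G H _)
  | _, _, _, _, .cons h p, .cons h' q =>
      .cons ⟨fun he => h.ne (congrArg Prod.fst he), Or.inr h, Or.inr h'⟩ (strongProdWalk p q)

lemma length_strongProdWalk : ∀ {a c : α} {b d : β} (p : G.Walk a c) (q : H.Walk b d),
    (strongProdWalk p q).length = max p.length q.length
  | _, _, _, _, .nil, q => by
      show (q.map (strongProdRight G H _)).length = _
      simp
  | _, _, _, _, .cons _ p, .nil => by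
      show (p.map (strongProdLeft G H _)).length + 1 = _
      simp
  | _, _, _, _, .cons _ p, .cons _ q => by
      show (strongProdWalk p q).length + 1 = _
      simp [length_strongProdWalk p q]

lemma strongProd_connected (hG : G.Connected) (hH : H.Connected) :
    (strongProd G H).Connected := by
  have : Nonempty (α × β) := ⟨(hG.nonempty.some, hH.nonempty.some)⟩
  exact ⟨fun x y => ⟨strongProdWalk (hG x.1 y.1).some (hH x.2 y.2).some⟩⟩

lemma dist_strongProd (hG : G.Connected) (hH : H.Connected) (a c : α) (b d : β) :
    (strongProd G H).dist (a, b) (c, d) = max (G.dist a c) (H.dist b d) := by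
  apply le_antisymm
  · obtain ⟨p, hp⟩ := hG.exists_walk_length_eq_dist a c
    obtain ⟨q, hq⟩ := hH.exists_walk_length_eq_dist b d
    calc _ ≤ (strongProdWalk p q).length := dist_le _
      _ = _ := by rw [length_strongProdWalk, hp, hq]
  · obtain ⟨W, hW⟩ := (strongProd_connected hG hH).exists_walk_length_eq_dist (a, b) (c, d)
    rw [← hW]
    exact max_le
      (dist_le_length_of_adj_imp Prod.fst (fun _ _ (h : (strongProd G H).Adj _ _) => h.2.1) W)
      (dist_le_length_of_adj_imp Prod.snd (fun _ _ (h : (strongProd G H).Adj _ _) => h.2.2) W)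

end StrongProduct

section StrongResolvingGraphOfStrongProduct

variable {G : SimpleGraph α} {H : SimpleGraph β}

lemma dist_le_max_of_maximallyDistantFrom {a c w : α} {m : ℕ}
    (hmd : m ≤ G.dist a c → MaximallyDistantFrom G a c) (hw : a = w ∨ G.Adj a w) :
    G.dist c w ≤ max (G.dist a c) m := by
  rcases hw with rfl | hadj
  · exact dist_comm.trans_le (le_max_left _ _)
  by_cases hm : m ≤ G.dist a c
  · exact (hmd hm w hadj).trans (le_max_left _ _)
  · have := hadj.reachable.dist_triangle_right c
    rw [dist_eq_one_iff_adj.mpr hadj, dist_comm (u := c) (v := a)] at this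
    omega

lemma maximallyDistantFrom_strongProd_iff (hG : G.Connected) (hH : H.Connected)
    {a c : α} {b d : β} :
    MaximallyDistantFrom (strongProd G H) (a, b) (c, d) ↔
      (H.dist b d ≤ G.dist a c → MaximallyDistantFrom G a c) ∧
        (G.dist a c ≤ H.dist b d → MaximallyDistantFrom H b d) := by
  simp only [MaximallyDistantFrom, Prod.forall, dist_strongProd hG hH]
  constructor
  · intro h
    constructor
    · intro hle w hadj
      have := h w b ⟨fun he => hadj.ne (congrArg Prod.fst he), Or.inr hadj, Or.inl rfl⟩
      rw [max_eq_left hle] at this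
      exact (le_max_left _ _).trans this
    · intro hle w hadj
      have := h a w ⟨fun he => hadj.ne (congrArg Prod.snd he), Or.inl rfl, Or.inr hadj⟩
      rw [max_eq_right hle] at this
      exact (le_max_right _ _).trans this
  · rintro ⟨hG', hH'⟩ w₁ w₂ ⟨-, h₁, h₂⟩
    refine max_le (dist_le_max_of_maximallyDistantFrom hG' h₁) ?_
    rw [max_comm]
    exact dist_le_max_of_maximallyDistantFrom hH' h₂

lemma maximallyDistantFrom_strongProd_of_adj_or_eq (hG : G.Connected) (hH : H.Connected)
    {a c : α} {b d : β} (hne : (a, b) ≠ (c, d))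
    (h₁ : a = c ∨ (strongResolvingGraph G).Adj a c)
    (h₂ : b = d ∨ (strongResolvingGraph H).Adj b d) :
    MaximallyDistantFrom (strongProd G H) (a, b) (c, d) := by
  rw [maximallyDistantFrom_strongProd_iff hG hH]
  constructor
  · intro hle
    rcases h₁ with rfl | h₁
    · simp only [SimpleGraph.dist_self, nonpos_iff_eq_zero, hH.dist_eq_zero_iff] at hle
      exact absurd (congrArg _ hle) hne
    · exact h₁.2.1
  · intro hle
    rcases h₂ with rfl | h₂
    · simp only [SimpleGraph.dist_self, nonpos_iff_eq_zero, hG.dist_eq_zero_iff] at hle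
      exact absurd (congrArg (·, b) hle) hne
    · exact h₂.2.1

lemma strongProd_le_strongResolvingGraph_strongProd (hG : G.Connected) (hH : H.Connected) :
    strongProd (strongResolvingGraph G) (strongResolvingGraph H) ≤
      strongResolvingGraph (strongProd G H) := by
  rintro ⟨a, b⟩ ⟨c, d⟩ ⟨hne, h₁, h₂⟩
  exact ⟨hne, maximallyDistantFrom_strongProd_of_adj_or_eq hG hH hne h₁ h₂,
    maximallyDistantFrom_strongProd_of_adj_or_eq hG hH hne.symm
      (h₁.imp Eq.symm Adj.symm) (h₂.imp Eq.symm Adj.symm)⟩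

lemma strongResolvingGraph_strongProd_le_cartSum (hG : G.Connected) (hH : H.Connected) :
    strongResolvingGraph (strongProd G H) ≤
      cartSum (strongResolvingGraph G) (strongResolvingGraph H) := by
  rintro ⟨a, b⟩ ⟨c, d⟩ ⟨hne, h₁, h₂⟩
  rw [maximallyDistantFrom_strongProd_iff hG hH] at h₁ h₂
  rw [dist_comm (u := c), dist_comm (u := d)] at h₂
  refine ⟨hne, ?_⟩
  rcases le_total (H.dist b d) (G.dist a c) with hle | hle
  · refine .inl ⟨?_, h₁.1 hle, h₂.1 hle⟩
    rintro rfl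
    simp only [SimpleGraph.dist_self, nonpos_iff_eq_zero, hH.dist_eq_zero_iff] at hle
    exact hne (congrArg _ hle)
  · refine .inr ⟨?_, h₁.2 hle, h₂.2 hle⟩
    rintro rfl
    simp only [SimpleGraph.dist_self, nonpos_iff_eq_zero, hG.dist_eq_zero_iff] at hle
    exact hne (congrArg (·, b) hle)

end StrongResolvingGraphOfStrongProduct

section IndependenceNumberOfProducts

variable {A : SimpleGraph α} {B : SimpleGraph β}

lemma mul_indepNum_le_indepNum_cartSum [Finite α] [Finite β] :
    A.indepNum * B.indepNum ≤ (cartSum A B).indepNum := by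
  obtain ⟨I, hI⟩ := A.exists_isNIndepSet_indepNum
  obtain ⟨J, hJ⟩ := B.exists_isNIndepSet_indepNum
  have hIJ : (cartSum A B).IsIndepSet (I ×ˢ J : Finset (α × β)) := by
    rintro x hx y hy - ⟨-, hadj | hadj⟩
    · exact hI.isIndepSet (mem_product.mp hx).1 (mem_product.mp hy).1 hadj.ne hadj
    · exact hJ.isIndepSet (mem_product.mp hx).2 (mem_product.mp hy).2 hadj.ne hadj
  rw [← hI.card_eq, ← hJ.card_eq, ← card_product]
  exact hIJ.card_le_indepNum

lemma card_le_indepNum_of_isClique_image_fst [Finite β] {T : Finset (α × β)}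
    (hT : (strongProd A B).IsIndepSet T) (hclique : A.IsClique (Prod.fst '' (T : Set (α × β)))) :
    #T ≤ B.indepNum := by
  classical
  have hsep : ∀ x ∈ T, ∀ y ∈ T, x ≠ y → x.2 ≠ y.2 ∧ ¬B.Adj x.2 y.2 := by
    intro x hx y hy hxy
    have hfst : x.1 = y.1 ∨ A.Adj x.1 y.1 :=
      or_iff_not_imp_left.mpr (hclique (Set.mem_image_of_mem _ hx) (Set.mem_image_of_mem _ hy))
    exact ⟨fun h => hT hx hy hxy ⟨hxy, hfst, .inl h⟩, fun h => hT hx hy hxy ⟨hxy, hfst, .inr h⟩⟩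
  have hinj : Set.InjOn Prod.snd (T : Set (α × β)) := fun x hx y hy h =>
    by_contra fun hxy => (hsep x hx y hy hxy).1 h
  have hindep : B.IsIndepSet (T.image Prod.snd : Finset β) := by
    simp only [coe_image]
    rintro _ ⟨x, hx, rfl⟩ _ ⟨y, hy, rfl⟩ hne
    exact (hsep x hx y hy (ne_of_apply_ne _ hne)).2
  rw [← card_image_of_injOn hinj]
  exact hindep.card_le_indepNum

lemma indepNum_strongProd_le [Fintype α] [DecidableEq α] [Finite β]
    (P : Finpartition (univ : Finset α))
    (hP : ∀ p ∈ P.parts, A.IsClique (p : Set α)) :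
    (strongProd A B).indepNum ≤ #P.parts * B.indepNum := by
  classical
  obtain ⟨S, hS⟩ := (strongProd A B).exists_isNIndepSet_indepNum
  rw [← hS.card_eq, mul_comm]
  refine card_le_mul_card_image_of_maps_to (f := fun x => P.part x.1)
    (fun x _ => P.part_mem.mpr (mem_univ _)) _ fun p hp => ?_
  refine card_le_indepNum_of_isClique_image_fst
    (hS.isIndepSet.mono (coe_subset.mpr (filter_subset _ _))) ((hP p hp).subset ?_)
  rintro _ ⟨x, hx, rfl⟩
  rw [← (mem_filter.mp hx).2]
  exact P.mem_part (mem_univ _)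

end IndependenceNumberOfProducts

lemma mul_sub_mul_eq_of_le {n₁ n₂ k₁ k₂ : ℕ} (h₁ : k₁ ≤ n₁) (h₂ : k₂ ≤ n₂) :
    n₁ * n₂ - k₁ * k₂ = n₂ * (n₁ - k₁) + n₁ * (n₂ - k₂) - (n₁ - k₁) * (n₂ - k₂) := by
  obtain ⟨s₁, rfl⟩ := Nat.exists_eq_add_of_le h₁
  obtain ⟨s₂, rfl⟩ := Nat.exists_eq_add_of_le h₂
  simp only [Nat.add_sub_cancel_left]
  rw [show (k₁ + s₁) * (k₂ + s₂) = k₁ * k₂ + (k₁ * s₂ + s₁ * k₂ + s₁ * s₂) by ring,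
    show (k₂ + s₂) * s₁ + (k₁ + s₁) * s₂ = s₁ * s₂ + (k₁ * s₂ + s₁ * k₂ + s₁ * s₂) by ring]
  simp only [Nat.add_sub_cancel_left]

theorem sdim_strongProd_of_SR_CGraph_general [Fintype α] [DecidableEq α] [Fintype β]
    (G : SimpleGraph α) (H : SimpleGraph β)
    (hG : G.Connected) (hH : H.Connected)
    (hC : IsCGraph (strongResolvingGraph G)) :
    sdim (strongProd G H) =
      Fintype.card β * sdim G + Fintype.card α * sdim H - sdim G * sdim H := by
  obtain ⟨P, hPcard, hPclique⟩ := hC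
  rw [indepNum_eq_simpleGraph_indepNum] at hPcard
  have hindep : (strongResolvingGraph (strongProd G H)).indepNum =
      (strongResolvingGraph G).indepNum * (strongResolvingGraph H).indepNum := by
    refine le_antisymm ?_ ?_
    · calc _ ≤ (strongProd (strongResolvingGraph G) (strongResolvingGraph H)).indepNum :=
            indepNum_anti (strongProd_le_strongResolvingGraph_strongProd hG hH)
        _ ≤ #P.parts * (strongResolvingGraph H).indepNum := indepNum_strongProd_le P hPclique
        _ = _ := by rw [hPcard]
    · exact mul_indepNum_le_indepNum_cartSum.trans
        (indepNum_anti (strongResolvingGraph_strongProd_le_cartSum hG hH))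
  rw [sdim_eq_card_sub_indepNum (strongProd_connected hG hH), sdim_eq_card_sub_indepNum hG,
    sdim_eq_card_sub_indepNum hH, hindep, Fintype.card_prod]
  exact mul_sub_mul_eq_of_le (indepNum_le_card _) (indepNum_le_card _)

theorem sdim_strongProd_of_SR_CGraph [Fintype α] [DecidableEq α] [Fintype β]
    (G : SimpleGraph α) (H : SimpleGraph β)
    (hG : G.Connected) (hGn : Nontrivial α) (hH : H.Connected) (hHn : Nontrivial β)
    (hC : IsCGraph (strongResolvingGraph G)) :
    sdim (strongProd G H) =
      Fintype.card β * sdim G + Fintype.card α * sdim H - sdim G * sdim H :=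
  sdim_strongProd_of_SR_CGraph_general G H hG hH hC
end

section
/- Let G be a complete k-partite graph K_{p₁,p₂,...,p_k} of order n₁ = p₁ + ⋯ + p_k with k ≥ 2, in which at most one part has size 1 (all but at most one p_i satisfy p_i ≥ 2), and let H be a finite connected nontrivial simple graph of order n₂. Then dim_s(G ⊠ H) = n₂(n₁ − k) + n₁ · dim_s(H) − (n₁ − k) · dim_s(H). -/
open SimpleGraph Finset

variable {α β : Type*}

/-! On a connected graph, a set is a strong metric generator iff it covers every edge of the
strong resolving graph: only the two ends of a mutually maximally distant pair resolve it, and any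
pair `u, v` is resolved by one end of a mutually maximally distant pair obtained by extending
geodesics through `u, v` maximally. Distances in `G ⊠ H` are maxima of coordinate distances.

For `G = K_{p₁,…,p_k}`, two vertices `(a, b)`, `(c, d)` with `a, c` in one part and `b, d` equal
or mutually maximally distant in `H` are mutually maximally distant in `G ⊠ H`. So a cover misses
at most `n₂ - dim_s(H)` vertices of each `part × V(H)`, whence
`dim_s(G ⊠ H) ≥ n₁n₂ - k(n₂ - dim_s(H))`.
Conversely, for a transversal `R` of the parts and an optimal cover `W` for `H`, the set
`(V(G) \ R) × V(H) ∪ R × W` is a cover: a mutually maximally distant pair in `R × V(H)` would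
project to one in `H`, or to two vertices of `R` mutually maximally distant in `G`, which needs
two singleton parts. -/

local infixl:70 " ⊠ " => strongProd

namespace SimpleGraph

variable {V : Type*} {G : SimpleGraph V} {u v : V}

lemma dist_le_one_of_eq_or_adj (h : u = v ∨ G.Adj u v) : G.dist u v ≤ 1 := by
  rcases h with rfl | h
  · simp
  · exact (dist_eq_one_iff_adj.mpr h).le

lemma Connected.exists_adj_dist_add_one_eq (hG : G.Connected) (h : u ≠ v) :
    ∃ w, G.Adj u w ∧ G.dist w v + 1 = G.dist u v := by
  obtain ⟨p, hp⟩ := hG.exists_walk_length_eq_dist u v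
  cases p with
  | nil => exact absurd rfl h
  | @cons _ w _ ha q =>
    refine ⟨w, ha, le_antisymm ?_ ?_⟩
    · have := dist_le q
      rw [Walk.length_cons] at hp
      omega
    · have := hG.dist_triangle (u := u) (v := w) (w := v)
      rwa [dist_eq_one_iff_adj.mpr ha, add_comm] at this

lemma Connected.exists_eq_or_adj_dist_eq_sub_one (hG : G.Connected) (u v : V) :
    ∃ w, (u = w ∨ G.Adj u w) ∧ G.dist w v = G.dist u v - 1 := by
  by_cases h : u = v
  · exact ⟨u, .inl rfl, by simp [h]⟩
  obtain ⟨w, hw, hd⟩ := hG.exists_adj_dist_add_one_eq h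
  exact ⟨w, .inr hw, by omega⟩

lemma exists_walk_length_le_of_forall_exists_adj_lt (f : V → ℕ)
    (hf : ∀ x, x ≠ v → ∃ y, G.Adj x y ∧ f y < f x) (u : V) :
    ∃ p : G.Walk u v, p.length ≤ f u := by
  induction hn : f u using Nat.strong_induction_on generalizing u with
  | _ n ih =>
    by_cases huv : u = v
    · subst huv
      exact ⟨.nil, by simp⟩
    obtain ⟨y, hy, hlt⟩ := hf u huv
    obtain ⟨p, hp⟩ := ih (f y) (hn ▸ hlt) y rfl
    exact ⟨.cons hy p, by rw [Walk.length_cons]; omega⟩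

lemma Reachable.le_add_dist_of_forall_adj (f : V → ℕ)
    (hf : ∀ x y, G.Adj x y → f x ≤ f y + 1)
    (h : G.Reachable u v) : f u ≤ f v + G.dist u v := by
  obtain ⟨p, hp⟩ := h.exists_walk_length_eq_dist
  rw [← hp]
  clear hp h
  induction p with
  | nil => simp
  | cons ha q ih =>
    rw [Walk.length_cons]
    have := hf _ _ ha
    omega

end SimpleGraph

section StrongResolving

variable {V : Type*} {G : SimpleGraph V} {u v w : V}

lemma MaximallyDistantFrom.of_dist_eq_add (hG : G.Connected) (h : MaximallyDistantFrom G u v)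
    (hd : G.dist u w = G.dist u v + G.dist v w) : MaximallyDistantFrom G u w := by
  intro x hx
  have := hG.dist_triangle (u := w) (v := v) (w := x)
  have := h x hx
  have := G.dist_comm (u := v) (v := w)
  omega

lemma exists_dist_eq_add_maximallyDistantFrom [Finite V] (hG : G.Connected) (v u : V) :
    ∃ w, G.dist v w = G.dist v u + G.dist u w ∧ MaximallyDistantFrom G w v := by
  obtain ⟨w, hw, hmax⟩ := Set.exists_max_image {w | G.dist v w = G.dist v u + G.dist u w}
    (G.dist v) (Set.toFinite _) ⟨u, by simp⟩
  refine ⟨w, hw, fun x hx => ?_⟩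
  by_contra! hlt
  have hvx := hG.dist_triangle (u := v) (v := w) (w := x)
  have hux := hG.dist_triangle (u := u) (v := w) (w := x)
  have hvu := hG.dist_triangle (u := v) (v := u) (w := x)
  have hwx : G.dist w x = 1 := dist_eq_one_iff_adj.mpr hx
  have := G.dist_comm (u := w) (v := v)
  have := hmax x (by simp only [Set.mem_ofPred_eq] at hw ⊢; omega)
  omega

lemma MaximallyDistantFrom.eq_of_dist_eq_add (hG : G.Connected) (h : MaximallyDistantFrom G v u)
    (hr : G.dist w u = G.dist w v + G.dist v u) : w = v := by
  by_contra hwv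
  obtain ⟨x, hx, hdx⟩ := hG.exists_adj_dist_add_one_eq (Ne.symm hwv)
  have := hG.dist_triangle (u := w) (v := x) (w := u)
  have := h x hx
  have := G.dist_comm (u := x) (v := w)
  have := G.dist_comm (u := v) (v := w)
  have := G.dist_comm (u := x) (v := u)
  omega

lemma MutuallyMaximallyDistant.eq_or_eq_of_stronglyResolves (hG : G.Connected)
    (hm : MutuallyMaximallyDistant G u v) (hr : StronglyResolves G w u v) : w = u ∨ w = v := by
  rcases hr with hr | hr
  · exact .inr (hm.2.eq_of_dist_eq_add hG hr)
  · exact .inl (hm.1.eq_of_dist_eq_add hG hr)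

lemma isStrongMetricGenerator_iff_isVertexCover_s11 [Finite V] (hG : G.Connected) {s : Finset V} :
    IsStrongMetricGenerator G s ↔ IsVertexCover (strongResolvingGraph G) s := by
  refine ⟨fun hs u v ⟨huv, hm⟩ => ?_, fun hs u v huv => ?_⟩
  · obtain ⟨w, hw, hr⟩ := hs u v huv
    rcases hm.eq_or_eq_of_stronglyResolves hG hr with rfl | rfl
    exacts [.inl hw, .inr hw]
  -- Extend `v, u` to `v, u, u'` and then `u', v, v'` along geodesics, maximally: `u', v'` are
  -- mutually maximally distant, and whichever of them lies in `s` resolves `u, v`.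
  obtain ⟨u', hu', hmu'⟩ := exists_dist_eq_add_maximallyDistantFrom hG v u
  obtain ⟨v', hv', hmv'⟩ := exists_dist_eq_add_maximallyDistantFrom hG u' v
  have hne : u' ≠ v' := by
    rintro rfl
    have := hG.pos_dist_of_ne huv
    simp only [dist_self] at hv'
    rw [dist_comm (u := u)] at this
    omega
  have := hG.dist_triangle (u := u') (v := u) (w := v')
  have := hG.dist_triangle (u := u) (v := v) (w := v')
  have := G.dist_comm (u := u) (v := u')
  have := G.dist_comm (u := v) (v := u')
  have := G.dist_comm (u := u) (v := v)
  have := G.dist_comm (u := u) (v := v')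
  have := G.dist_comm (u := v) (v := v')
  rcases hs ⟨hne, hmu'.of_dist_eq_add hG hv', hmv'⟩ with h | h
  · exact ⟨u', h, .inr (by omega)⟩
  · exact ⟨v', h, .inl (by omega)⟩

variable [Fintype V]

lemma isStrongMetricGenerator_univ : IsStrongMetricGenerator G univ := by
  intro _ v _
  exact ⟨v, mem_univ v, .inl (by simp)⟩

lemma sdim_le_card {s : Finset V} (h : IsStrongMetricGenerator G s) : sdim G ≤ #s :=
  Nat.sInf_le ⟨s, h, rfl⟩

lemma exists_isStrongMetricGenerator_card_eq_sdim (G : SimpleGraph V) :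
    ∃ s, IsStrongMetricGenerator G s ∧ #s = sdim G :=
  Nat.sInf_mem (s := {n | ∃ s, IsStrongMetricGenerator G s ∧ #s = n})
    ⟨_, univ, isStrongMetricGenerator_univ, rfl⟩

end StrongResolving

section StrongProduct

variable {G : SimpleGraph α} {H : SimpleGraph β}

lemma dist_le_max_one_of_maximallyDistantFrom {a c x : α}
    (hac : a = c ∨ MaximallyDistantFrom G a c)
    (hx : a = x ∨ G.Adj a x) : G.dist c x ≤ max (G.dist a c) 1 := by
  rcases hx with rfl | hx
  · exact le_max_of_le_left G.dist_comm.le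
  rcases hac with rfl | hac
  · exact le_max_of_le_right (dist_eq_one_iff_adj.mpr hx).le
  · exact le_max_of_le_left (hac x hx)

variable (hG : G.Connected) (hH : H.Connected)
include hG hH

lemma exists_walk_strongProd_length_le (x y : α × β) :
    ∃ p : (G ⊠ H).Walk x y, p.length ≤ max (G.dist x.1 y.1) (H.dist x.2 y.2) := by
  refine exists_walk_length_le_of_forall_exists_adj_lt
    (fun z => max (G.dist z.1 y.1) (H.dist z.2 y.2)) (fun z hz => ?_) x
  obtain ⟨a, ha, hda⟩ := hG.exists_eq_or_adj_dist_eq_sub_one z.1 y.1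
  obtain ⟨b, hb, hdb⟩ := hH.exists_eq_or_adj_dist_eq_sub_one z.2 y.2
  have hpos : 0 < max (G.dist z.1 y.1) (H.dist z.2 y.2) := by
    by_cases h1 : z.1 = y.1
    · exact lt_max_of_lt_right (hH.pos_dist_of_ne fun h2 => hz (Prod.ext h1 h2))
    · exact lt_max_of_lt_left (hG.pos_dist_of_ne h1)
  have hlt : max (G.dist a y.1) (H.dist b y.2) < max (G.dist z.1 y.1) (H.dist z.2 y.2) := by
    omega
  refine ⟨(a, b), ⟨fun h => ?_, ha, hb⟩, hlt⟩
  subst h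
  exact hlt.ne rfl

lemma connected_strongProd : (G ⊠ H).Connected :=
  have : Nonempty (α × β) := ⟨(hG.nonempty.some, hH.nonempty.some)⟩
  .mk fun x y => (exists_walk_strongProd_length_le hG hH x y).elim fun p _ => p.reachable

lemma dist_strongProd_s11 (x y : α × β) :
    (G ⊠ H).dist x y = max (G.dist x.1 y.1) (H.dist x.2 y.2) := by
  refine le_antisymm ?_ ?_
  · obtain ⟨p, hp⟩ := exists_walk_strongProd_length_le hG hH x y
    exact (dist_le p).trans hp
  -- The potential `z ↦ max (G.dist z.1 y.1) (H.dist z.2 y.2)` is 1-Lipschitz along edges.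
  have := ((connected_strongProd hG hH).preconnected x y).le_add_dist_of_forall_adj
    (fun z => max (G.dist z.1 y.1) (H.dist z.2 y.2)) fun z z' h => by
      obtain ⟨-, h1, h2⟩ := h
      have := dist_le_one_of_eq_or_adj h1
      have := dist_le_one_of_eq_or_adj h2
      have := hG.dist_triangle (u := z.1) (v := z'.1) (w := y.1)
      have := hH.dist_triangle (u := z.2) (v := z'.2) (w := y.2)
      omega
  simpa using this

variable {a c : α} {b d : β}

lemma maximallyDistantFrom_strongProd (hne : (a, b) ≠ (c, d))
    (hac : a = c ∨ MaximallyDistantFrom G a c) (hbd : b = d ∨ MaximallyDistantFrom H b d) :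
    MaximallyDistantFrom (G ⊠ H) (a, b) (c, d) := by
  rintro ⟨x, y⟩ ⟨-, hx, hy⟩
  dsimp only at hx hy
  have hpos := (connected_strongProd hG hH).pos_dist_of_ne hne
  have := dist_le_max_one_of_maximallyDistantFrom hac hx
  have := dist_le_max_one_of_maximallyDistantFrom hbd hy
  rw [dist_strongProd_s11 hG hH] at hpos ⊢
  rw [dist_strongProd_s11 hG hH]
  dsimp only at hpos ⊢
  omega

lemma MaximallyDistantFrom.of_strongProd_left (h : MaximallyDistantFrom (G ⊠ H) (a, b) (c, d))
    (hle : H.dist b d ≤ G.dist a c) : MaximallyDistantFrom G a c := by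
  intro x hx
  have := h (x, b) ⟨fun h => hx.ne (congrArg Prod.fst h), .inr hx, .inl rfl⟩
  rw [dist_strongProd_s11 hG hH, dist_strongProd_s11 hG hH] at this
  dsimp only at this
  have := H.dist_comm (u := b) (v := d)
  omega

lemma MaximallyDistantFrom.of_strongProd_right (h : MaximallyDistantFrom (G ⊠ H) (a, b) (c, d))
    (hle : G.dist a c ≤ H.dist b d) : MaximallyDistantFrom H b d := by
  intro y hy
  have := h (a, y) ⟨fun h => hy.ne (congrArg Prod.snd h), .inl rfl, .inr hy⟩
  rw [dist_strongProd_s11 hG hH, dist_strongProd_s11 hG hH] at this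
  dsimp only at this
  have := G.dist_comm (u := a) (v := c)
  omega

lemma strongResolvingGraph_strongProd_adj (hne : (a, b) ≠ (c, d))
    (hac : a = c ∨ (strongResolvingGraph G).Adj a c)
    (hbd : b = d ∨ (strongResolvingGraph H).Adj b d) :
    (strongResolvingGraph (G ⊠ H)).Adj (a, b) (c, d) :=
  ⟨hne,
    maximallyDistantFrom_strongProd hG hH hne (hac.imp_right (·.2.1)) (hbd.imp_right (·.2.1)),
    maximallyDistantFrom_strongProd hG hH hne.symm (hac.imp Eq.symm (·.2.2))
      (hbd.imp Eq.symm (·.2.2))⟩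

lemma strongResolvingGraph_adj_of_strongProd_left
    (h : (strongResolvingGraph (G ⊠ H)).Adj (a, b) (c, d)) (hle : H.dist b d ≤ G.dist a c) :
    (strongResolvingGraph G).Adj a c := by
  obtain ⟨hne, h₁, h₂⟩ := h
  refine ⟨fun hac => hne ?_, h₁.of_strongProd_left hG hH hle,
    h₂.of_strongProd_left hG hH (by rwa [dist_comm (G := G), dist_comm (G := H)])⟩
  subst hac
  have hbd : H.dist b d = 0 := by simpa using hle
  rw [hH.dist_eq_zero_iff.mp hbd]

lemma strongResolvingGraph_adj_of_strongProd_right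
    (h : (strongResolvingGraph (G ⊠ H)).Adj (a, b) (c, d)) (hle : G.dist a c ≤ H.dist b d) :
    (strongResolvingGraph H).Adj b d := by
  obtain ⟨hne, h₁, h₂⟩ := h
  refine ⟨fun hbd => hne ?_, h₁.of_strongProd_right hG hH hle,
    h₂.of_strongProd_right hG hH (by rwa [dist_comm (G := G), dist_comm (G := H)])⟩
  subst hbd
  have hac : G.dist a c = 0 := by simpa using hle
  rw [hG.dist_eq_zero_iff.mp hac]

end StrongProduct

section Bounds

variable [Fintype β] {G : SimpleGraph α} {H : SimpleGraph β}
  (hG : G.Connected) (hH : H.Connected)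
include hG hH

lemma card_add_sdim_le_of_isVertexCover {S T : Finset (α × β)}
    (hS : IsVertexCover (strongResolvingGraph (G ⊠ H)) S) (hST : Disjoint S T)
    (hT : ∀ x ∈ T, ∀ y ∈ T, x.1 = y.1 ∨ (strongResolvingGraph G).Adj x.1 y.1) :
    #T + sdim H ≤ Fintype.card β := by
  classical
  have hT' : ∀ x ∈ T, ∀ y ∈ T, x ≠ y →
      ¬ (x.2 = y.2 ∨ (strongResolvingGraph H).Adj x.2 y.2) := by
    intro x hx y hy hne hxy
    rcases hS (strongResolvingGraph_strongProd_adj hG hH hne (hT x hx y hy) hxy) with h | h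
    exacts [disjoint_left.mp hST h hx, disjoint_left.mp hST h hy]
  have hinj : Set.InjOn Prod.snd (T : Set (α × β)) := fun x hx y hy h =>
    by_contra fun hne => hT' x hx y hy hne (.inl h)
  have hcover : IsVertexCover (strongResolvingGraph H) ↑(univ \ T.image Prod.snd) := by
    intro b d hbd
    by_contra! h
    simp only [coe_sdiff, coe_univ, coe_image, Set.mem_sdiff, Set.mem_univ, true_and, not_not,
      Set.mem_image, mem_coe] at h
    obtain ⟨⟨x, hx, rfl⟩, ⟨y, hy, rfl⟩⟩ := h
    exact hT' x hx y hy (fun h => hbd.ne (h ▸ rfl)) (.inr hbd)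
  have := sdim_le_card ((isStrongMetricGenerator_iff_isVertexCover_s11 hH).mpr hcover)
  rw [card_univ_sdiff, card_image_of_injOn hinj] at this
  have := (T.image Prod.snd).card_le_univ
  rw [card_image_of_injOn hinj] at this
  omega

variable [Fintype α]

theorem sdim_strongProd_le (R : Finset α) (hRclique : G.IsClique (R : Set α))
    (hRindep : (strongResolvingGraph G).IsIndepSet (R : Set α)) :
    sdim (G ⊠ H) ≤ (Fintype.card α - #R) * Fintype.card β + #R * sdim H := by
  classical
  obtain ⟨W, hW, hWcard⟩ := exists_isStrongMetricGenerator_card_eq_sdim H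
  rw [isStrongMetricGenerator_iff_isVertexCover_s11 hH] at hW
  have hU : IsVertexCover (strongResolvingGraph (G ⊠ H)) ↑(Rᶜ ×ˢ univ ∪ R ×ˢ W) := by
    rintro ⟨a, b⟩ ⟨c, d⟩ hadj
    by_contra! h
    simp only [coe_union, coe_product, coe_compl, coe_univ, Set.mem_union, Set.mem_prod,
      Set.mem_compl_iff, mem_coe, Set.mem_univ, and_true, not_or, not_and, not_not] at h
    obtain ⟨⟨ha, hb⟩, hc, hd⟩ := h
    by_cases hbd : b = d
    · subst hbd
      have hac := strongResolvingGraph_adj_of_strongProd_left hG hH hadj (by simp)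
      exact hRindep ha hc hac.ne hac
    have hle : G.dist a c ≤ H.dist b d := by
      have := hH.pos_dist_of_ne hbd
      have := dist_le_one_of_eq_or_adj (G := G) (u := a) (v := c)
        (or_iff_not_imp_left.mpr (hRclique ha hc))
      omega
    rcases hW (strongResolvingGraph_adj_of_strongProd_right hG hH hadj hle) with h | h
    exacts [hb ha h, hd hc h]
  calc sdim (G ⊠ H) ≤ #(Rᶜ ×ˢ univ ∪ R ×ˢ W) :=
        sdim_le_card
          ((isStrongMetricGenerator_iff_isVertexCover_s11 (connected_strongProd hG hH)).mpr hU)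
    _ = _ := by
      rw [card_union_of_disjoint (disjoint_product.mpr (.inl disjoint_compl_left)), card_product,
        card_product, card_compl, card_univ, hWcard]

theorem card_mul_card_add_le_sdim_strongProd {ι : Type*} [Fintype ι] (f : α → ι)
    (hf : ∀ i, (strongResolvingGraph G).IsClique (f ⁻¹' {i})) :
    Fintype.card α * Fintype.card β + Fintype.card ι * sdim H ≤
      sdim (G ⊠ H) + Fintype.card ι * Fintype.card β := by
  classical
  obtain ⟨S, hS, hScard⟩ := exists_isStrongMetricGenerator_card_eq_sdim (G ⊠ H)
  rw [isStrongMetricGenerator_iff_isVertexCover_s11 (connected_strongProd hG hH)] at hS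
  have hfiber (i : ι) : #{x ∈ Sᶜ | f x.1 = i} + sdim H ≤ Fintype.card β := by
    refine card_add_sdim_le_of_isVertexCover hG hH hS
      (disjoint_compl_right.mono_right (filter_subset _ _)) fun x hx y hy => ?_
    rw [mem_filter] at hx hy
    by_cases h : x.1 = y.1
    exacts [.inl h, .inr (hf i hx.2 hy.2 h)]
  have hsum : #Sᶜ = ∑ i, #{x ∈ Sᶜ | f x.1 = i} :=
    card_eq_sum_card_fiberwise fun _ _ => mem_univ _
  have := sum_le_sum fun i (_ : i ∈ univ) => hfiber i
  rw [sum_add_distrib, sum_const, sum_const, card_univ, smul_eq_mul, smul_eq_mul, ← hsum] at this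
  have := card_add_card_compl S
  rw [Fintype.card_prod] at this
  omega

end Bounds

section CompleteMultipartite

variable {ι : Type*} {V : ι → Type*}

lemma completeMultipartiteGraph_connected [Nontrivial ι] [∀ i, Nonempty (V i)] :
    (completeMultipartiteGraph V).Connected := by
  have hadj {x y : Σ i, V i} (h : x.1 ≠ y.1) : (completeMultipartiteGraph V).Adj x y := h
  have : Nonempty (Σ i, V i) := ⟨⟨Classical.arbitrary ι, Classical.arbitrary _⟩⟩
  refine .mk fun x y => ?_
  obtain ⟨j, hj⟩ := exists_ne x.1
  by_cases h : x.1 = y.1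
  · let z : Σ i, V i := ⟨j, Classical.arbitrary _⟩
    exact (hadj (Ne.symm hj : x.1 ≠ z.1)).reachable.trans
      (hadj (h ▸ hj : z.1 ≠ y.1)).reachable
  · exact (hadj h).reachable

lemma completeMultipartiteGraph_strongResolvingGraph_adj [Nontrivial ι] [∀ i, Nonempty (V i)]
    {x y : Σ i, V i} (hne : x ≠ y) (h : x.1 = y.1) :
    (strongResolvingGraph (completeMultipartiteGraph V)).Adj x y := by
  have hmax {x y : Σ i, V i} (hne : x ≠ y) (h : x.1 = y.1) :
      MaximallyDistantFrom (completeMultipartiteGraph V) x y := fun w hw => by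
    rw [dist_eq_one_iff_adj.mpr (show y.1 ≠ w.1 from h ▸ hw)]
    exact completeMultipartiteGraph_connected.pos_dist_of_ne hne
  exact ⟨hne, hmax hne h, hmax hne.symm h.symm⟩

lemma completeMultipartiteGraph_not_maximallyDistantFrom {x : Σ i, V i} {i : ι} {a : V i}
    (h : x.1 ≠ i) [Nontrivial (V i)] :
    ¬ MaximallyDistantFrom (completeMultipartiteGraph V) x ⟨i, a⟩ := by
  intro hmax
  obtain ⟨b, hb⟩ := exists_ne a
  have hxa : (completeMultipartiteGraph V).Adj x ⟨i, a⟩ := h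
  have hxb : (completeMultipartiteGraph V).Adj x ⟨i, b⟩ := h
  have := hmax _ hxb
  rw [dist_eq_one_iff_adj.mpr hxa] at this
  refine ((hxa.reachable.symm.trans hxb.reachable).one_lt_dist_of_ne_of_not_adj ?_ ?_).not_ge this
  · simpa using hb.symm
  · simp

lemma completeMultipartiteGraph_isClique_of_injOn {R : Set (Σ i, V i)}
    (hR : R.InjOn Sigma.fst) : (completeMultipartiteGraph V).IsClique R :=
  fun _ hx _ hy hne h => hne (hR hx hy h)

lemma strongResolvingGraph_completeMultipartiteGraph_isIndepSet_of_injOn {R : Set (Σ i, V i)}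
    (hR : R.InjOn Sigma.fst) (hV : ∀ i j, i ≠ j → Nontrivial (V i) ∨ Nontrivial (V j)) :
    (strongResolvingGraph (completeMultipartiteGraph V)).IsIndepSet R := by
  rintro ⟨i, a⟩ ha ⟨j, b⟩ hb hne ⟨-, hab, hba⟩
  have hij : i ≠ j := fun h => hne (hR ha hb h)
  rcases hV i j hij with hi | hj
  · exact completeMultipartiteGraph_not_maximallyDistantFrom hij.symm hba
  · exact completeMultipartiteGraph_not_maximallyDistantFrom hij hab

variable [Fintype ι] [∀ i, Fintype (V i)] [Nontrivial ι] [∀ i, Nonempty (V i)]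
  [Fintype β] {H : SimpleGraph β}

theorem sdim_strongProd_completeMultipartiteGraph_le (hH : H.Connected)
    (hV : ∀ i j, i ≠ j → Nontrivial (V i) ∨ Nontrivial (V j)) :
    sdim (completeMultipartiteGraph V ⊠ H) ≤
      (Fintype.card (Σ i, V i) - Fintype.card ι) * Fintype.card β +
        Fintype.card ι * sdim H := by
  classical
  let s : ι ↪ Σ i, V i :=
    ⟨fun i => ⟨i, Classical.arbitrary _⟩, fun _ _ h => congrArg Sigma.fst h⟩
  have hR : (univ.map s : Set (Σ i, V i)).InjOn Sigma.fst := by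
    simp only [coe_map, coe_univ, Set.image_univ]
    rintro _ ⟨i, rfl⟩ _ ⟨j, rfl⟩ h
    cases h
    rfl
  simpa using sdim_strongProd_le completeMultipartiteGraph_connected hH (univ.map s)
    (completeMultipartiteGraph_isClique_of_injOn hR)
    (strongResolvingGraph_completeMultipartiteGraph_isIndepSet_of_injOn hR hV)

theorem card_mul_card_add_le_sdim_strongProd_completeMultipartiteGraph (hH : H.Connected) :
    Fintype.card (Σ i, V i) * Fintype.card β + Fintype.card ι * sdim H ≤
      sdim (completeMultipartiteGraph V ⊠ H) + Fintype.card ι * Fintype.card β :=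
  card_mul_card_add_le_sdim_strongProd completeMultipartiteGraph_connected hH Sigma.fst
    fun _ _ hx _ hy hne => completeMultipartiteGraph_strongResolvingGraph_adj hne (hx.trans hy.symm)

end CompleteMultipartite

theorem sdim_strongProd_completeMultipartite_general [Fintype β] {k : ℕ} (hk : 2 ≤ k)
    (p : Fin k → ℕ) (hp : ∀ i, 1 ≤ p i)
    (hone : ∀ i j, p i = 1 → p j = 1 → i = j)
    (H : SimpleGraph β) (hH : H.Connected) :
    sdim (strongProd (completeMultipartiteGraph (fun i => Fin (p i))) H) =
      Fintype.card β * ((∑ i, p i) - k) + (∑ i, p i) * sdim H -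
        ((∑ i, p i) - k) * sdim H := by
  have : Nontrivial (Fin k) := Fin.nontrivial_iff_two_le.mpr hk
  have : ∀ i, Nonempty (Fin (p i)) := fun i => ⟨⟨0, hp i⟩⟩
  have hV (i j : Fin k) (hij : i ≠ j) : Nontrivial (Fin (p i)) ∨ Nontrivial (Fin (p j)) := by
    simp only [Fin.nontrivial_iff_two_le]
    have := hp i; have := hp j; have := hone i j
    omega
  have hupper := sdim_strongProd_completeMultipartiteGraph_le hH hV
  have hlower := card_mul_card_add_le_sdim_strongProd_completeMultipartiteGraph
    (V := fun i => Fin (p i)) hH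
  obtain ⟨m, hm⟩ := Nat.exists_eq_add_of_le (sum_le_sum fun i (_ : i ∈ univ) => hp i)
  simp only [Fintype.card_sigma, Fintype.card_fin, sum_const, card_univ, smul_eq_mul, mul_one]
    at hupper hlower hm
  simp only [hm, Nat.add_sub_cancel_left, add_mul] at hupper hlower ⊢
  rw [mul_comm (Fintype.card β) m]
  omega

theorem sdim_strongProd_completeMultipartite [Fintype β] {k : ℕ} (hk : 2 ≤ k)
    (p : Fin k → ℕ) (hp : ∀ i, 1 ≤ p i)
    (hone : ∀ i j, p i = 1 → p j = 1 → i = j)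
    (H : SimpleGraph β) (hH : H.Connected) (hHn : Nontrivial β) :
    sdim (strongProd (completeMultipartiteGraph (fun i => Fin (p i))) H) =
      Fintype.card β * ((∑ i, p i) - k) + (∑ i, p i) * sdim H -
        ((∑ i, p i) - k) * sdim H :=
  sdim_strongProd_completeMultipartite_general hk p hp hone H hH
end
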